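/- arXiv:0801.0079 — 3 statements merged into one kernel-verified Lean document; each statement's English description precedes it below -/
import Mathlib

section
/- The SDMMSA estimator is nondecreasing in the index: μ̂_1 ≤ μ̂_2 ≤ … ≤ μ̂_k. More precisely, μ̂ is constant on each block [i_u, i_{u−1}−1] of the SDMMSA partition, and the common block values strictly increase from later blocks to earlier ones: for u > u', Ȳ_{i_u, i_{u−1}−1} < Ȳ_{i_{u'}, i_{u'−1}−1}. -/
/-!
Two facts drive the proof. First, `i₁ = firstIdx t` maximises `j ↦ Ȳ_{j,t}` and every `j < i₁`
does strictly worse; as `Ȳ_{j,t}` is a weighted mediant of `Ȳ_{j,i₁-1}` and `Ȳ_{i₁,t}`, this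
forces `Ȳ_{j,i₁-1} < Ȳ_{i₁,t}`, and for `j = i₂` it says that the next block value is smaller.
Second, the indices `i_u` strictly decrease until they reach `1`, so the blocks
`[i_u, i_{u-1} - 1]` partition `[1,k]`, and unwinding the recursion of `muhat` shows that it
takes the block value on each block.
-/

open Finset

noncomputable section SDMMSA

/-- Pooled weight `n_{i,j} = ∑_{h=i}^j n_h`. -/
def pooledWeight (n : ℕ → ℝ) (i j : ℕ) : ℝ := ∑ h ∈ Finset.Icc i j, n h

/-- Pooled (weighted) mean `Ȳ_{i,j} = (∑_{h=i}^j n_h Y_h) / n_{i,j}`. -/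
def pooledMean (n Y : ℕ → ℝ) (i j : ℕ) : ℝ :=
  (∑ h ∈ Finset.Icc i j, n h * Y h) / pooledWeight n i j

/-- The first SDMMSA index for the data `(Y_1,n_1),…,(Y_t,n_t)`:
the smallest `j ∈ [1,t]` at which `Ȳ_{j,t} = max_{1 ≤ j' ≤ t} Ȳ_{j',t}`. -/
def firstIdx (n Y : ℕ → ℝ) (t : ℕ) : ℕ :=
  sInf {j | 1 ≤ j ∧ j ≤ t ∧ ∀ j', 1 ≤ j' → j' ≤ t → pooledMean n Y j' t ≤ pooledMean n Y j t}

/-- Fuel-based recursion implementing the SDMMSA step-down procedure: on data range `[1,t]`,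
every `i ≥ i₁ = firstIdx n Y t` gets the pooled mean `Ȳ_{i₁,t}` of the top block, and for
`i < i₁` we recurse on the data range `[1, i₁ - 1]`.  A fuel of `t` suffices since the
range shrinks strictly at each step. -/
def sdmmsaAux (n Y : ℕ → ℝ) : ℕ → ℕ → ℕ → ℝ
  | 0, _, _ => 0
  | fuel + 1, t, i =>
      if firstIdx n Y t ≤ i then pooledMean n Y (firstIdx n Y t) t
      else sdmmsaAux n Y fuel (firstIdx n Y t - 1) i

/-- `muhat n Y k i` is the SDMMSA estimate `μ̂_i` computed from the data
`(Y_1,n_1),…,(Y_k,n_k)`. -/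
def muhat (n Y : ℕ → ℝ) (k i : ℕ) : ℝ := sdmmsaAux n Y k k i

/-- The SDMMSA indices `i_u` computed from the data `(Y_1,n_1),…,(Y_k,n_k)`:
`sdIdx n Y k 0 = i_0 = k+1` and `i_{u+1}` is the first SDMMSA index of `[1, i_u - 1]`. -/
def sdIdx (n Y : ℕ → ℝ) (k : ℕ) : ℕ → ℕ
  | 0 => k + 1
  | u + 1 => firstIdx n Y (sdIdx n Y k u - 1)

/-- The number of steps `h` of the SDMMSA: the first `u` with `i_u = 1`. -/
def sdSteps (n Y : ℕ → ℝ) (k : ℕ) : ℕ := sInf {u | sdIdx n Y k u = 1}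

end SDMMSA

namespace SDMMSA

theorem div_lt_div_of_add_div_add_lt {α : Type*} [Field α] [LinearOrder α] [IsStrictOrderedRing α]
    {A B a b : α} (ha : 0 < a) (hb : 0 < b) (h : (A + B) / (a + b) < B / b) : A / a < B / b := by
  rw [div_lt_div_iff₀ (add_pos ha hb) hb] at h
  rw [div_lt_div_iff₀ ha hb]
  linarith

theorem sum_Icc_consecutive {M : Type*} [AddCommMonoid M] (f : ℕ → M) {j m t : ℕ}
    (hjm : j ≤ m + 1) (hmt : m ≤ t) :
    ∑ h ∈ Icc j t, f h = ∑ h ∈ Icc j m, f h + ∑ h ∈ Icc (m + 1) t, f h := by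
  simp only [← Ico_add_one_right_eq_Icc]
  exact (sum_Ico_consecutive f hjm (by omega)).symm

variable {n Y : ℕ → ℝ} {k : ℕ}

theorem pooledWeight_pos {j t : ℕ} (hn : ∀ h ∈ Icc j t, 0 < n h) (hjt : j ≤ t) :
    0 < pooledWeight n j t :=
  sum_pos hn (nonempty_Icc.2 hjt)

theorem pooledMean_head_lt_tail {j m t : ℕ} (hn : ∀ h ∈ Icc j t, 0 < n h) (hjm : j ≤ m)
    (hmt : m < t) (h : pooledMean n Y j t < pooledMean n Y (m + 1) t) :
    pooledMean n Y j m < pooledMean n Y (m + 1) t := by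
  have hn_sub : ∀ {a b}, j ≤ a → b ≤ t → ∀ h ∈ Icc a b, 0 < n h := fun hja hbt h hh =>
    hn h (mem_Icc.2 ⟨hja.trans (mem_Icc.1 hh).1, (mem_Icc.1 hh).2.trans hbt⟩)
  unfold pooledMean pooledWeight at h ⊢
  rw [sum_Icc_consecutive (j := j) _ (by omega) hmt.le,
    sum_Icc_consecutive (j := j) _ (by omega) hmt.le] at h
  exact div_lt_div_of_add_div_add_lt (pooledWeight_pos (hn_sub le_rfl hmt.le) hjm)
    (pooledWeight_pos (hn_sub (by omega) le_rfl) hmt) h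

theorem firstIdx_spec {t : ℕ} (ht : 1 ≤ t) :
    1 ≤ firstIdx n Y t ∧ firstIdx n Y t ≤ t ∧
      ∀ j, 1 ≤ j → j ≤ t → pooledMean n Y j t ≤ pooledMean n Y (firstIdx n Y t) t := by
  obtain ⟨b, hb, hmax⟩ :=
    exists_max_image (Icc 1 t) (fun j => pooledMean n Y j t) ⟨1, mem_Icc.2 ⟨le_rfl, ht⟩⟩
  rw [mem_Icc] at hb
  exact Nat.sInf_mem (s := {j | 1 ≤ j ∧ j ≤ t ∧
    ∀ j', 1 ≤ j' → j' ≤ t → pooledMean n Y j' t ≤ pooledMean n Y j t})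
    ⟨b, hb.1, hb.2, fun j h1 h2 => hmax j (mem_Icc.2 ⟨h1, h2⟩)⟩

theorem pooledMean_lt_of_lt_firstIdx {t j : ℕ} (ht : 1 ≤ t) (hj : 1 ≤ j)
    (hlt : j < firstIdx n Y t) : pooledMean n Y j t < pooledMean n Y (firstIdx n Y t) t := by
  obtain ⟨-, hle, hmax⟩ := firstIdx_spec (n := n) (Y := Y) ht
  by_contra! hge
  have : firstIdx n Y t ≤ j :=
    Nat.sInf_le ⟨hj, by omega, fun j' h1 h2 => (hmax j' h1 h2).trans hge⟩
  omega

theorem pooledMean_below_firstIdx_lt {t j : ℕ} (ht : 1 ≤ t) (hn : ∀ h ∈ Icc 1 t, 0 < n h)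
    (hj : 1 ≤ j) (hlt : j < firstIdx n Y t) :
    pooledMean n Y j (firstIdx n Y t - 1) < pooledMean n Y (firstIdx n Y t) t := by
  have hle := (firstIdx_spec (n := n) (Y := Y) ht).2.1
  have hsucc : firstIdx n Y t - 1 + 1 = firstIdx n Y t := by omega
  have key := pooledMean_head_lt_tail (m := firstIdx n Y t - 1)
    (fun h hh => hn h (mem_Icc.2 ⟨hj.trans (mem_Icc.1 hh).1, (mem_Icc.1 hh).2⟩)) (by omega)
    (by omega) (hsucc ▸ pooledMean_lt_of_lt_firstIdx ht hj hlt)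
  rwa [hsucc] at key

theorem sdIdx_succ (u : ℕ) : sdIdx n Y k (u + 1) = firstIdx n Y (sdIdx n Y k u - 1) := rfl

theorem sdIdx_bounds {u : ℕ} (h : ∀ v < u, sdIdx n Y k v ≠ 1) :
    1 ≤ sdIdx n Y k u ∧ sdIdx n Y k u + u ≤ k + 1 := by
  induction u with
  | zero => simp [sdIdx]
  | succ u ih =>
    have ⟨h1, h2⟩ := ih fun v hv => h v (by omega)
    have := h u (by omega)
    have := firstIdx_spec (n := n) (Y := Y) (t := sdIdx n Y k u - 1) (by omega)
    rw [sdIdx_succ]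
    omega

theorem exists_sdIdx_eq_one : ∃ u, sdIdx n Y k u = 1 := by
  by_contra! h
  have := sdIdx_bounds (n := n) (Y := Y) (u := k + 1) fun v _ => h v
  omega

theorem sdIdx_sdSteps : sdIdx n Y k (sdSteps n Y k) = 1 :=
  Nat.sInf_mem exists_sdIdx_eq_one

theorem sdIdx_ne_one {u : ℕ} (hu : u < sdSteps n Y k) : sdIdx n Y k u ≠ 1 := by
  have : u ∉ {u | sdIdx n Y k u = 1} := Nat.notMem_of_lt_sInf hu
  exact this

theorem sdIdx_bounds_of_le {u : ℕ} (hu : u ≤ sdSteps n Y k) :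
    1 ≤ sdIdx n Y k u ∧ sdIdx n Y k u + u ≤ k + 1 :=
  sdIdx_bounds fun _ hv => sdIdx_ne_one (by omega)

theorem two_le_sdIdx {u : ℕ} (hu : u < sdSteps n Y k) : 2 ≤ sdIdx n Y k u := by
  have := (sdIdx_bounds_of_le hu.le).1
  have := sdIdx_ne_one hu
  omega

theorem sdSteps_le : sdSteps n Y k ≤ k := by
  have := (sdIdx_bounds_of_le (n := n) (Y := Y) (k := k) le_rfl).2
  rw [sdIdx_sdSteps] at this
  omega

theorem sdIdx_succ_lt {u : ℕ} (hu : u < sdSteps n Y k) : sdIdx n Y k (u + 1) < sdIdx n Y k u := by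
  have := two_le_sdIdx hu
  have := (firstIdx_spec (n := n) (Y := Y) (t := sdIdx n Y k u - 1) (by omega)).2.1
  rw [sdIdx_succ]
  omega

theorem sdIdx_strictAntiOn : StrictAntiOn (sdIdx n Y k) (Set.Iic (sdSteps n Y k)) :=
  strictAntiOn_of_add_one_lt Set.ordConnected_Iic fun _ _ _ hu => sdIdx_succ_lt hu

variable (n Y k) in
/-- The common value `Ȳ_{i_u, i_{u-1}-1}` of `μ̂` on the `u`-th block. -/
noncomputable def blockMean (u : ℕ) : ℝ :=
  pooledMean n Y (sdIdx n Y k u) (sdIdx n Y k (u - 1) - 1)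

theorem blockMean_succ_lt (hn : ∀ h, 1 ≤ h → h ≤ k → 0 < n h) {u : ℕ} (hu1 : 1 ≤ u)
    (hu : u + 1 ≤ sdSteps n Y k) : blockMean n Y k (u + 1) < blockMean n Y k u := by
  set t := sdIdx n Y k (u - 1) - 1
  have hfirst : firstIdx n Y t = sdIdx n Y k u := by rw [← sdIdx_succ, Nat.sub_add_cancel hu1]
  have h2 := two_le_sdIdx (n := n) (Y := Y) (k := k) (u := u - 1) (by omega)
  have hbound := (sdIdx_bounds_of_le (n := n) (Y := Y) (k := k) (u := u - 1) (by omega)).2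
  have := pooledMean_below_firstIdx_lt (t := t) (by omega)
    (fun h hh => hn h (mem_Icc.1 hh).1 (by have := (mem_Icc.1 hh).2; omega))
    (sdIdx_bounds_of_le hu).1 (hfirst ▸ sdIdx_succ_lt (by omega))
  rw [hfirst] at this
  exact this

theorem blockMean_strictAntiOn (hn : ∀ h, 1 ≤ h → h ≤ k → 0 < n h) :
    StrictAntiOn (blockMean n Y k) (Set.Icc 1 (sdSteps n Y k)) :=
  strictAntiOn_of_add_one_lt Set.ordConnected_Icc fun _ _ hu hu' =>
    blockMean_succ_lt hn hu.1 hu'.2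

-- After `v` blocks have been split off, the recursion runs on `[1, i_v - 1]` and needs fuel
-- for the `u - v` steps still separating it from the block of `i`.
theorem sdmmsaAux_eq_blockMean {u i : ℕ} (hu : u ≤ sdSteps n Y k) (hi1 : sdIdx n Y k u ≤ i)
    (hi2 : i < sdIdx n Y k (u - 1)) : ∀ fuel v, v < u → u ≤ v + fuel →
      sdmmsaAux n Y fuel (sdIdx n Y k v - 1) i = blockMean n Y k u := by
  have hanti := sdIdx_strictAntiOn (n := n) (Y := Y) (k := k)
  intro fuel
  induction fuel with
  | zero => intro v hv hfuel; omega
  | succ fuel ih =>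
    intro v hv hfuel
    rw [sdmmsaAux, ← sdIdx_succ]
    split_ifs with h
    · obtain rfl : u = v + 1 := by
        by_contra hne
        have := hanti.antitoneOn (Set.mem_Iic.2 (by omega : v + 1 ≤ _))
          (Set.mem_Iic.2 (by omega : u - 1 ≤ _)) (by omega : v + 1 ≤ u - 1)
        omega
      rfl
    · refine ih (v + 1) ?_ (by omega)
      by_contra hle
      obtain rfl : u = v + 1 := by omega
      omega

theorem muhat_eq_blockMean {u i : ℕ} (hu1 : 1 ≤ u) (hu : u ≤ sdSteps n Y k)
    (hi1 : sdIdx n Y k u ≤ i) (hi2 : i ≤ sdIdx n Y k (u - 1) - 1) :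
    muhat n Y k i = blockMean n Y k u := by
  have := two_le_sdIdx (n := n) (Y := Y) (k := k) (u := u - 1) (by omega)
  have := sdSteps_le (n := n) (Y := Y) (k := k)
  exact sdmmsaAux_eq_blockMean hu hi1 (by omega) k 0 hu1 (by omega)

theorem exists_block {i : ℕ} (hi1 : 1 ≤ i) (hi : i ≤ k) :
    ∃ u, 1 ≤ u ∧ u ≤ sdSteps n Y k ∧ sdIdx n Y k u ≤ i ∧ i ≤ sdIdx n Y k (u - 1) - 1 := by
  have hex : ∃ u, sdIdx n Y k u ≤ i := ⟨sdSteps n Y k, by rw [sdIdx_sdSteps]; exact hi1⟩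
  have hle : Nat.find hex ≤ sdSteps n Y k := Nat.find_min' hex (by rw [sdIdx_sdSteps]; exact hi1)
  have hpos : 1 ≤ Nat.find hex := by
    by_contra! h0
    have := Nat.find_spec hex
    rw [Nat.lt_one_iff.1 h0] at this
    simp only [sdIdx] at this
    omega
  have := Nat.find_min hex (by omega : Nat.find hex - 1 < Nat.find hex)
  exact ⟨Nat.find hex, hpos, hle, Nat.find_spec hex, by omega⟩

theorem muhat_monotoneOn (hn : ∀ h, 1 ≤ h → h ≤ k → 0 < n h) :
    MonotoneOn (muhat n Y k) (Set.Icc 1 k) := by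
  intro i hi i' hi' hii'
  obtain ⟨u, hu1, hu, hiu, hiu'⟩ := exists_block (n := n) (Y := Y) hi.1 hi.2
  obtain ⟨u', hu1', hu', hi'u, hi'u'⟩ := exists_block (n := n) (Y := Y) hi'.1 hi'.2
  have hu'u : u' ≤ u := by
    by_contra! h
    have := sdIdx_strictAntiOn.antitoneOn (Set.mem_Iic.2 hu)
      (Set.mem_Iic.2 (by omega : u' - 1 ≤ sdSteps n Y k)) (by omega : u ≤ u' - 1)
    have := two_le_sdIdx (n := n) (Y := Y) (k := k) (u := u' - 1) (by omega)
    omega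
  rw [muhat_eq_blockMean hu1 hu hiu hiu', muhat_eq_blockMean hu1' hu' hi'u hi'u']
  exact (blockMean_strictAntiOn hn).antitoneOn ⟨hu1', hu'⟩ ⟨hu1, hu⟩ hu'u

end SDMMSA

open SDMMSA in
theorem sdmmsa_estimator_monotone_general (k : ℕ) (n Y : ℕ → ℝ)
    (hn : ∀ h, 1 ≤ h → h ≤ k → 0 < n h) :
    (∀ i i', 1 ≤ i → i ≤ i' → i' ≤ k → muhat n Y k i ≤ muhat n Y k i') ∧
    (∀ u, 1 ≤ u → u ≤ sdSteps n Y k →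
      ∀ i, sdIdx n Y k u ≤ i → i ≤ sdIdx n Y k (u - 1) - 1 →
        muhat n Y k i = pooledMean n Y (sdIdx n Y k u) (sdIdx n Y k (u - 1) - 1)) ∧
    (∀ u u', 1 ≤ u' → u' < u → u ≤ sdSteps n Y k →
      pooledMean n Y (sdIdx n Y k u) (sdIdx n Y k (u - 1) - 1) <
        pooledMean n Y (sdIdx n Y k u') (sdIdx n Y k (u' - 1) - 1)) :=
  ⟨fun _ _ hi hii' hi' => muhat_monotoneOn hn ⟨hi, by omega⟩ ⟨by omega, hi'⟩ hii',
    fun _ hu1 hu _ hi1 hi2 => muhat_eq_blockMean hu1 hu hi1 hi2,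
    fun _ _ hu' hlt hu => blockMean_strictAntiOn hn ⟨hu', by omega⟩ ⟨by omega, hu⟩ hlt⟩

/-- Remark 1: the SDMMSA estimator is nondecreasing in the index; it is
constant on each block `[i_u, i_{u-1} - 1]` of the SDMMSA partition, equal there to the
pooled mean `Ȳ_{i_u, i_{u-1}-1}`, and the block values strictly increase from later
blocks to earlier ones. -/
theorem sdmmsa_estimator_monotone (k : ℕ) (hk : 1 ≤ k) (n Y : ℕ → ℝ)
    (hn : ∀ h, 1 ≤ h → h ≤ k → 0 < n h) :
    (∀ i i', 1 ≤ i → i ≤ i' → i' ≤ k → muhat n Y k i ≤ muhat n Y k i') ∧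
    (∀ u, 1 ≤ u → u ≤ sdSteps n Y k →
      ∀ i, sdIdx n Y k u ≤ i → i ≤ sdIdx n Y k (u - 1) - 1 →
        muhat n Y k i = pooledMean n Y (sdIdx n Y k u) (sdIdx n Y k (u - 1) - 1)) ∧
    (∀ u u', 1 ≤ u' → u' < u → u ≤ sdSteps n Y k →
      pooledMean n Y (sdIdx n Y k u) (sdIdx n Y k (u - 1) - 1) <
        pooledMean n Y (sdIdx n Y k u') (sdIdx n Y k (u' - 1) - 1)) :=
  sdmmsa_estimator_monotone_general k n Y hn
end

section
/- (Lemma 1) For the SDMMSA partition [1,k] = ∪_{u=1}^{h} [i_u, i_{u−1}−1], at every block boundary the raw sample means satisfy a strict inequality: for every u ∈ [1,h] with i_u > 1, one has Ȳ_{i_u − 1} < Ȳ_{i_u}. -/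
open Finset

section helpers

lemma split_sum (f : ℕ → ℝ) (a t : ℕ) (h : a ≤ t) :
    ∑ h ∈ Finset.Icc a t, f h = f a + ∑ h ∈ Finset.Icc (a+1) t, f h := by
  have hins : Finset.Icc a t = insert a (Finset.Icc (a+1) t) := by
    ext x; simp only [Finset.mem_Icc, Finset.mem_insert]; omega
  rw [hins, Finset.sum_insert (by simp only [Finset.mem_Icc]; omega)]

lemma firstIdx_mem (n Y : ℕ → ℝ) (t : ℕ) (ht : 1 ≤ t) :
    firstIdx n Y t ∈ {j | 1 ≤ j ∧ j ≤ t ∧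
      ∀ j', 1 ≤ j' → j' ≤ t → pooledMean n Y j' t ≤ pooledMean n Y j t} := by
  apply Nat.sInf_mem
  obtain ⟨j, hj, hmax⟩ := Finset.exists_max_image (Finset.Icc 1 t)
    (fun j => pooledMean n Y j t) ⟨1, by simp [ht]⟩
  simp only [Finset.mem_Icc] at hj hmax
  exact ⟨j, hj.1, hj.2, fun j' h1 h2 => hmax j' ⟨h1, h2⟩⟩

lemma wpos (n : ℕ → ℝ) (t a : ℕ) (ha : 1 ≤ a) (hat : a ≤ t)
    (hn : ∀ h, 1 ≤ h → h ≤ t → 0 < n h) : 0 < pooledWeight n a t := by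
  apply Finset.sum_pos
  · intro i hi; simp only [Finset.mem_Icc] at hi; exact hn i (le_trans ha hi.1) hi.2
  · exact ⟨a, by simp [Finset.mem_Icc, hat]⟩

lemma key (n Y : ℕ → ℝ) (t j : ℕ) (ht : 1 ≤ t)
    (hn : ∀ h, 1 ≤ h → h ≤ t → 0 < n h) (hjdef : j = firstIdx n Y t) (hj1 : 1 < j) :
    Y (j - 1) < Y j := by
  have hmem0 := firstIdx_mem n Y t ht
  rw [← hjdef] at hmem0
  obtain ⟨hj1', hjt, hmax⟩ := hmem0
  have hW : 0 < pooledWeight n j t := wpos n t j hj1' hjt hn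
  have hnjm : 0 < n (j-1) := hn (j-1) (by omega) (by omega)
  have hsplit1 : pooledMean n Y (j-1) t =
      (n (j-1) * Y (j-1) + ∑ h ∈ Finset.Icc j t, n h * Y h) /
        (n (j-1) + pooledWeight n j t) := by
    unfold pooledMean pooledWeight
    rw [split_sum (fun h => n h * Y h) (j-1) t (by omega), split_sum n (j-1) t (by omega)]
    have : j - 1 + 1 = j := by omega
    rw [this]
  have hstrict : pooledMean n Y (j-1) t < pooledMean n Y j t := by
    rcases lt_or_eq_of_le (hmax (j-1) (by omega) (by omega)) with h | h
    · exact h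
    · exfalso
      have hmem : (j-1) ∈ {j | 1 ≤ j ∧ j ≤ t ∧
          ∀ j', 1 ≤ j' → j' ≤ t → pooledMean n Y j' t ≤ pooledMean n Y j t} :=
        ⟨by omega, by omega, fun j' h1 h2 => h ▸ hmax j' h1 h2⟩
      have hle : firstIdx n Y t ≤ j - 1 := Nat.sInf_le hmem
      omega
  have hYlt : Y (j-1) < pooledMean n Y j t := by
    rw [hsplit1] at hstrict
    rw [pooledMean] at hstrict ⊢
    rw [div_lt_div_iff₀ (by linarith) hW] at hstrict
    rw [lt_div_iff₀ hW]
    nlinarith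
  have hYge : pooledMean n Y j t ≤ Y j := by
    rcases eq_or_lt_of_le hjt with h | h
    · subst h
      rw [pooledMean, pooledWeight]
      rw [Finset.Icc_self, Finset.sum_singleton, Finset.sum_singleton,
        mul_comm, mul_div_assoc, div_self (ne_of_gt (hn j hj1' le_rfl)), mul_one]
    · have hW' : 0 < pooledWeight n (j+1) t := wpos n t (j+1) (by omega) (by omega) hn
      have hnj : 0 < n j := hn j hj1' hjt
      have hsplit2 : pooledMean n Y j t =
          (n j * Y j + ∑ h ∈ Finset.Icc (j+1) t, n h * Y h) /
            (n j + pooledWeight n (j+1) t) := by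
        unfold pooledMean pooledWeight
        rw [split_sum (fun h => n h * Y h) j t (by omega), split_sum n j t (by omega)]
      have hle : pooledMean n Y (j+1) t ≤ pooledMean n Y j t :=
        hmax (j+1) (by omega) (by omega)
      rw [hsplit2] at hle ⊢
      rw [pooledMean, div_le_div_iff₀ hW' (by linarith)] at hle
      rw [div_le_iff₀ (by linarith)]
      nlinarith
  linarith

end helpers


/-- Lemma 1: for the SDMMSA partition, at every block boundary the raw
sample means satisfy `Ȳ_{i_u - 1} < Ȳ_{i_u}` (whenever `i_u > 1`). -/
theorem sdmmsa_block_boundary_strict (k : ℕ) (hk : 1 ≤ k) (n Y : ℕ → ℝ)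
    (hn : ∀ h, 1 ≤ h → h ≤ k → 0 < n h) :
    ∀ u, 1 ≤ u → u ≤ sdSteps n Y k → 1 < sdIdx n Y k u →
      Y (sdIdx n Y k u - 1) < Y (sdIdx n Y k u) := by
  have inv : ∀ u, u < sdSteps n Y k → 2 ≤ sdIdx n Y k u ∧ sdIdx n Y k u ≤ k + 1 := by
    intro u
    induction u with
    | zero => intro _; exact ⟨by simp [sdIdx]; omega, by simp [sdIdx]⟩
    | succ v ih =>
      intro hv
      have hih := ih (by omega)
      have ht : 1 ≤ sdIdx n Y k v - 1 := by omega
      have hmem := firstIdx_mem n Y (sdIdx n Y k v - 1) ht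
      obtain ⟨h1, h2, _⟩ := hmem
      have heq : sdIdx n Y k (v+1) = firstIdx n Y (sdIdx n Y k v - 1) := rfl
      constructor
      · rcases Nat.lt_or_ge 1 (sdIdx n Y k (v+1)) with h | h
        · omega
        · exfalso
          have : sdIdx n Y k (v+1) = 1 := by omega
          have := Nat.sInf_le (show (v+1) ∈ {u | sdIdx n Y k u = 1} from this)
          have : sdSteps n Y k ≤ v + 1 := this
          omega
      · omega
  intro u hu1 hu2 hgt
  obtain ⟨v, rfl⟩ : ∃ v, u = v + 1 := ⟨u - 1, by omega⟩
  have hv : v < sdSteps n Y k := by omega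
  obtain ⟨hiv2, hivk⟩ := inv v hv
  have ht : 1 ≤ sdIdx n Y k v - 1 := by omega
  exact key n Y (sdIdx n Y k v - 1) (sdIdx n Y k (v+1)) ht
    (fun h h1 h2 => hn h h1 (by omega)) rfl hgt
end

section
/- (Theorem 1) The SDMMSA estimator (μ̂_1,…,μ̂_k) is the maximum likelihood estimator under the monotone constraint; equivalently, (μ̂_1,…,μ̂_k) belongs to the isotonic cone {(μ_1,…,μ_k) : μ_1 ≤ μ_2 ≤ … ≤ μ_k} and minimizes the weighted sum of squares f(μ_1,…,μ_k) = Σ_{i=1}^{k} n_i (Ȳ_i − μ_i)² over that cone. -/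
open Finset

/-!
Expanding the squares, minimality of `μ̂` follows from the variational inequality
`∑ nᵢ (Yᵢ - μ̂ᵢ)(μᵢ - μ̂ᵢ) ≤ 0` for every isotone `μ`, which is proved block by block along the
recursion. On the top block `[i₁, k]` the value `c = Ȳ_{i₁,k}` is the largest
pooled mean, so every tail sum `∑_{h ≥ j} n_h (Y_h - c)` is `≤ 0` and the one from `j = i₁`
vanishes; Abel summation against the isotone sequence `μ - c` then gives the inequality.
Isotonicity holds because `Ȳ_{i₂,k} ≤ Ȳ_{i₁,k}` makes `Ȳ_{i₂,i₁-1}`, the other part of a weighted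
average, at most `Ȳ_{i₁,k}`.
-/

theorem Finset.sum_Icc_consecutive {M : Type*} [AddCommMonoid M] (f : ℕ → M) {i j l : ℕ}
    (hij : i ≤ j + 1) (hjl : j ≤ l) :
    ∑ h ∈ Icc i l, f h = ∑ h ∈ Icc i j, f h + ∑ h ∈ Icc (j + 1) l, f h := by
  rw [← Ico_add_one_right_eq_Icc, ← Ico_add_one_right_eq_Icc, ← Ico_add_one_right_eq_Icc,
    sum_Ico_consecutive f hij (by omega)]

theorem sum_mul_le_sum_mul_of_tail_sum_nonpos {w μ : ℕ → ℝ} {a b : ℕ}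
    (hw : ∀ j ∈ Icc (a + 1) b, ∑ h ∈ Icc j b, w h ≤ 0) (hμ : MonotoneOn μ (Set.Icc a b)) :
    ∑ h ∈ Icc a b, w h * μ h ≤ (∑ h ∈ Icc a b, w h) * μ a := by
  induction hd : b - a generalizing a with
  | zero =>
    rcases (show b < a ∨ b = a by omega) with hba | rfl
    · simp [Icc_eq_empty_of_lt hba]
    · simp
  | succ d ih =>
    have hab : a + 1 ≤ b := by omega
    have htail : ∑ h ∈ Icc (a + 1) b, w h * μ h ≤ (∑ h ∈ Icc (a + 1) b, w h) * μ (a + 1) :=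
      ih (fun j hj => hw j (by simp only [mem_Icc] at hj ⊢; omega))
        (hμ.mono (Set.Icc_subset_Icc_left (Nat.le_succ a))) (by omega)
    have hstep : (∑ h ∈ Icc (a + 1) b, w h) * μ (a + 1) ≤ (∑ h ∈ Icc (a + 1) b, w h) * μ a :=
      mul_le_mul_of_nonpos_left
        (hμ ⟨le_rfl, by omega⟩ ⟨Nat.le_succ a, hab⟩ (Nat.le_succ a))
        (hw (a + 1) (left_mem_Icc.2 hab))
    rw [sum_Icc_consecutive (fun h => w h * μ h) (Nat.le_succ a) (by omega : a ≤ b),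
      sum_Icc_consecutive w (Nat.le_succ a) (by omega : a ≤ b)]
    simp only [Icc_self, sum_singleton]
    linarith

theorem sum_mul_sq_sub_le_of_sum_mul_sub_mul_sub_nonpos {ι : Type*} (s : Finset ι)
    {n Y g μ : ι → ℝ} (hn : ∀ i ∈ s, 0 ≤ n i)
    (h : ∑ i ∈ s, n i * (Y i - g i) * (μ i - g i) ≤ 0) :
    ∑ i ∈ s, n i * (Y i - g i) ^ 2 ≤ ∑ i ∈ s, n i * (Y i - μ i) ^ 2 := by
  have hexpand : ∑ i ∈ s, n i * (Y i - μ i) ^ 2 = ∑ i ∈ s,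
      (n i * (Y i - g i) ^ 2 + n i * (μ i - g i) ^ 2 - 2 * (n i * (Y i - g i) * (μ i - g i))) :=
    sum_congr rfl fun _ _ => by ring
  have hsq : 0 ≤ ∑ i ∈ s, n i * (μ i - g i) ^ 2 :=
    sum_nonneg fun i hi => mul_nonneg (hn i hi) (sq_nonneg _)
  rw [hexpand, sum_sub_distrib, sum_add_distrib, ← mul_sum]
  linarith

section PooledMean

variable {n Y : ℕ → ℝ} {i j t : ℕ}

theorem pooledWeight_pos (hn : ∀ h ∈ Icc i j, 0 < n h) (hij : i ≤ j) :
    0 < pooledWeight n i j :=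
  sum_pos hn (nonempty_Icc.2 hij)

theorem sum_mul_sub_eq_pooledWeight_mul (c : ℝ) (hW : pooledWeight n i j ≠ 0) :
    ∑ h ∈ Icc i j, n h * (Y h - c) = pooledWeight n i j * (pooledMean n Y i j - c) := by
  rw [mul_sub, pooledMean, mul_div_cancel₀ _ hW, pooledWeight, sum_mul]
  simp only [mul_sub, sum_sub_distrib]

theorem pooledMean_le_of_pooledMean_le (hn : ∀ h ∈ Icc i t, 0 < n h) (hij : i ≤ j) (hjt : j < t)
    (h : pooledMean n Y i t ≤ pooledMean n Y (j + 1) t) :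
    pooledMean n Y i j ≤ pooledMean n Y (j + 1) t := by
  set c := pooledMean n Y (j + 1) t
  have hW : ∀ {l r}, i ≤ l → l ≤ r → r ≤ t → 0 < pooledWeight n l r := fun hil hlr hrt =>
    pooledWeight_pos (fun h hh => hn h (Icc_subset_Icc hil hrt hh)) hlr
  have hsplit : ∑ h ∈ Icc i t, n h * (Y h - c)
      = ∑ h ∈ Icc i j, n h * (Y h - c) + ∑ h ∈ Icc (j + 1) t, n h * (Y h - c) :=
    sum_Icc_consecutive _ (by omega) hjt.le
  rw [sum_mul_sub_eq_pooledWeight_mul c (hW le_rfl (hij.trans hjt.le) le_rfl).ne',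
    sum_mul_sub_eq_pooledWeight_mul c (hW le_rfl hij hjt.le).ne',
    sum_mul_sub_eq_pooledWeight_mul c (hW (by omega) hjt le_rfl).ne', sub_self, mul_zero,
    add_zero] at hsplit
  have hneg : pooledWeight n i j * (pooledMean n Y i j - c) ≤ 0 :=
    hsplit ▸ mul_nonpos_of_nonneg_of_nonpos (hW le_rfl (hij.trans hjt.le) le_rfl).le (sub_nonpos.2 h)
  exact sub_nonpos.1 (nonpos_of_mul_nonpos_right hneg (hW le_rfl hij hjt.le))

theorem sum_mul_sub_pooledMean_mul_sub_nonpos {μ : ℕ → ℝ} {a : ℕ}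
    (hn : ∀ h ∈ Icc a t, 0 < n h)
    (hmax : ∀ j ∈ Icc a t, pooledMean n Y j t ≤ pooledMean n Y a t)
    (hμ : MonotoneOn μ (Set.Icc a t)) :
    ∑ i ∈ Icc a t, n i * (Y i - pooledMean n Y a t) * (μ i - pooledMean n Y a t) ≤ 0 := by
  set c := pooledMean n Y a t
  rcases lt_or_ge t a with hta | hat
  · simp [Icc_eq_empty_of_lt hta]
  have hW : ∀ j ∈ Icc a t, 0 < pooledWeight n j t := fun j hj =>
    pooledWeight_pos (fun h hh => hn h (Icc_subset_Icc_left (mem_Icc.1 hj).1 hh))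
      (mem_Icc.1 hj).2
  have htail : ∀ j ∈ Icc (a + 1) t, ∑ h ∈ Icc j t, n h * (Y h - c) ≤ 0 := fun j hj => by
    have hj' : j ∈ Icc a t := Icc_subset_Icc_left (Nat.le_succ a) hj
    rw [sum_mul_sub_eq_pooledWeight_mul c (hW j hj').ne']
    exact mul_nonpos_of_nonneg_of_nonpos (hW j hj').le (sub_nonpos.2 (hmax j hj'))
  calc ∑ i ∈ Icc a t, n i * (Y i - c) * (μ i - c)
      ≤ (∑ h ∈ Icc a t, n h * (Y h - c)) * (μ a - c) :=
        sum_mul_le_sum_mul_of_tail_sum_nonpos htail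
          fun x hx y hy hxy => sub_le_sub_right (hμ hx hy hxy) c
    _ = 0 := by
        rw [sum_mul_sub_eq_pooledWeight_mul c (hW a (left_mem_Icc.2 hat)).ne', sub_self,
          mul_zero, zero_mul]

end PooledMean

section Estimator

variable {n Y : ℕ → ℝ} {f t i : ℕ}

theorem firstIdx_spec (n Y : ℕ → ℝ) (ht : 1 ≤ t) :
    firstIdx n Y t ∈ Icc 1 t ∧
      ∀ j ∈ Icc 1 t, pooledMean n Y j t ≤ pooledMean n Y (firstIdx n Y t) t := by
  obtain ⟨b, hb, hmax⟩ :=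
    exists_max_image (Icc 1 t) (fun j => pooledMean n Y j t) (nonempty_Icc.2 ht)
  obtain ⟨h1, ht', hspec⟩ := Nat.sInf_mem (s := {j | 1 ≤ j ∧ j ≤ t ∧
      ∀ j', 1 ≤ j' → j' ≤ t → pooledMean n Y j' t ≤ pooledMean n Y j t})
    ⟨b, (mem_Icc.1 hb).1, (mem_Icc.1 hb).2, fun j' h1 h2 => hmax j' (mem_Icc.2 ⟨h1, h2⟩)⟩
  exact ⟨mem_Icc.2 ⟨h1, ht'⟩, fun j hj => hspec j (mem_Icc.1 hj).1 (mem_Icc.1 hj).2⟩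

theorem sdmmsaAux_succ_of_firstIdx_le (h : firstIdx n Y t ≤ i) :
    sdmmsaAux n Y (f + 1) t i = pooledMean n Y (firstIdx n Y t) t :=
  if_pos h

theorem sdmmsaAux_succ_of_lt_firstIdx (h : i < firstIdx n Y t) :
    sdmmsaAux n Y (f + 1) t i = sdmmsaAux n Y f (firstIdx n Y t - 1) i :=
  if_neg h.not_ge

theorem sdmmsaAux_self (ht : 1 ≤ t) (htf : t ≤ f) :
    sdmmsaAux n Y f t t = pooledMean n Y (firstIdx n Y t) t := by
  obtain ⟨f, rfl⟩ : ∃ f', f = f' + 1 := ⟨f - 1, by omega⟩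
  exact sdmmsaAux_succ_of_firstIdx_le (mem_Icc.1 (firstIdx_spec n Y ht).1).2

theorem pooledMean_firstIdx_le_of_firstIdx_eq_succ {b : ℕ} (hn : ∀ h ∈ Icc 1 t, 0 < n h)
    (ht : 1 ≤ t) (hb : firstIdx n Y t = b + 1) (hb1 : 1 ≤ b) :
    pooledMean n Y (firstIdx n Y b) b ≤ pooledMean n Y (b + 1) t := by
  obtain ⟨ha, hmax⟩ := firstIdx_spec n Y ht
  obtain ⟨ha', -⟩ := firstIdx_spec n Y hb1
  rw [hb, mem_Icc] at ha
  rw [mem_Icc] at ha'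
  refine pooledMean_le_of_pooledMean_le (fun h hh => hn h (Icc_subset_Icc_left ha'.1 hh))
    ha'.2 (by omega) ?_
  rw [← hb]
  exact hmax _ (mem_Icc.2 ⟨ha'.1, by omega⟩)

theorem monotoneOn_sdmmsaAux (hn : ∀ h ∈ Icc 1 t, 0 < n h) (htf : t ≤ f) :
    MonotoneOn (sdmmsaAux n Y f t) (Set.Icc 1 t) := by
  induction f generalizing t with
  | zero => exact (Set.subsingleton_Icc_of_ge (by omega : t ≤ 1)).monotoneOn _
  | succ f ih =>
    rcases Nat.eq_zero_or_pos t with rfl | ht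
    · exact (Set.subsingleton_Icc_of_ge zero_le_one).monotoneOn _
    obtain ⟨ha, -⟩ := firstIdx_spec n Y ht
    obtain ⟨b, hb⟩ := Nat.exists_eq_add_one.2 (mem_Icc.1 ha).1
    rw [hb, mem_Icc] at ha
    have hsub : MonotoneOn (sdmmsaAux n Y f b) (Set.Icc 1 b) :=
      ih (fun h hh => hn h (Icc_subset_Icc_right (by omega) hh)) (by omega)
    have hlow : ∀ {i}, i ≤ b → sdmmsaAux n Y (f + 1) t i = sdmmsaAux n Y f b i := fun hi => by
      rw [sdmmsaAux_succ_of_lt_firstIdx (by omega), hb, Nat.add_sub_cancel]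
    have hhigh : ∀ {i}, b + 1 ≤ i → sdmmsaAux n Y (f + 1) t i = pooledMean n Y (b + 1) t :=
      fun hi => by rw [sdmmsaAux_succ_of_firstIdx_le (by omega), hb]
    rintro i ⟨hi1, -⟩ i' - hii'
    rcases le_or_gt (b + 1) i with hbi | hib
    · rw [hhigh hbi, hhigh (hbi.trans hii')]
    rcases le_or_gt i' b with hi'b | hbi'
    · rw [hlow (by omega), hlow hi'b]
      exact hsub ⟨hi1, by omega⟩ ⟨hi1.trans hii', hi'b⟩ hii'
    rw [hlow (by omega), hhigh (by omega)]
    calc sdmmsaAux n Y f b i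
        ≤ sdmmsaAux n Y f b b := hsub ⟨hi1, by omega⟩ ⟨by omega, le_rfl⟩ (by omega)
      _ = pooledMean n Y (firstIdx n Y b) b := sdmmsaAux_self (by omega) (by omega)
      _ ≤ pooledMean n Y (b + 1) t :=
        pooledMean_firstIdx_le_of_firstIdx_eq_succ hn ht hb (by omega)

theorem sum_mul_sub_sdmmsaAux_mul_sub_nonpos {μ : ℕ → ℝ} (hn : ∀ h ∈ Icc 1 t, 0 < n h)
    (htf : t ≤ f) (hμ : MonotoneOn μ (Set.Icc 1 t)) :
    ∑ i ∈ Icc 1 t, n i * (Y i - sdmmsaAux n Y f t i) * (μ i - sdmmsaAux n Y f t i) ≤ 0 := by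
  induction f generalizing t with
  | zero => simp [Nat.le_zero.1 htf]
  | succ f ih =>
    rcases Nat.eq_zero_or_pos t with rfl | ht
    · simp
    obtain ⟨ha, hmax⟩ := firstIdx_spec n Y ht
    obtain ⟨b, hb⟩ := Nat.exists_eq_add_one.2 (mem_Icc.1 ha).1
    rw [hb, mem_Icc] at ha
    rw [sum_Icc_consecutive _ (by omega : 1 ≤ b + 1) (by omega : b ≤ t)]
    refine add_nonpos ?_ ?_
    · rw [sum_congr rfl fun i hi => by
        rw [sdmmsaAux_succ_of_lt_firstIdx (by have := mem_Icc.1 hi; omega), hb, Nat.add_sub_cancel]]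
      exact ih (fun h hh => hn h (Icc_subset_Icc_right (by omega) hh)) (by omega)
        (hμ.mono (Set.Icc_subset_Icc_right (by omega)))
    · rw [sum_congr rfl fun i hi => by
        rw [sdmmsaAux_succ_of_firstIdx_le (by have := mem_Icc.1 hi; omega), hb]]
      exact sum_mul_sub_pooledMean_mul_sub_nonpos
        (fun h hh => hn h (Icc_subset_Icc_left (by omega) hh))
        (fun j hj => hb ▸ hmax j (Icc_subset_Icc_left (by omega) hj))
        (hμ.mono (Set.Icc_subset_Icc_left (by omega)))

end Estimator

theorem sdmmsa_is_isotonic_mle_general (k : ℕ) (n Y : ℕ → ℝ)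
    (hn : ∀ h, 1 ≤ h → h ≤ k → 0 < n h) :
    (∀ i i', 1 ≤ i → i ≤ i' → i' ≤ k → muhat n Y k i ≤ muhat n Y k i') ∧
    (∀ μ : ℕ → ℝ, (∀ i i', 1 ≤ i → i ≤ i' → i' ≤ k → μ i ≤ μ i') →
      ∑ i ∈ Finset.Icc 1 k, n i * (Y i - muhat n Y k i) ^ 2 ≤
        ∑ i ∈ Finset.Icc 1 k, n i * (Y i - μ i) ^ 2) := by
  have hn' : ∀ h ∈ Icc 1 k, 0 < n h := fun h hh => hn h (mem_Icc.1 hh).1 (mem_Icc.1 hh).2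
  refine ⟨fun i i' hi hii' hi'k =>
    monotoneOn_sdmmsaAux hn' le_rfl ⟨hi, hii'.trans hi'k⟩ ⟨hi.trans hii', hi'k⟩ hii', ?_⟩
  intro μ hμ
  exact sum_mul_sq_sub_le_of_sum_mul_sub_mul_sub_nonpos _ (fun i hi => (hn' i hi).le)
    (sum_mul_sub_sdmmsaAux_mul_sub_nonpos hn' le_rfl
      fun i hi i' hi' hii' => hμ i i' hi.1 hii' hi'.2)

/-- Theorem 1: the SDMMSA estimator `(μ̂_1,…,μ̂_k)` is the maximum likelihood
estimator under the monotone constraint: it belongs to the isotonic cone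
`{μ : μ_1 ≤ … ≤ μ_k}` and minimizes `f(μ) = ∑_{i=1}^k n_i (Ȳ_i - μ_i)²` over that cone. -/
theorem sdmmsa_is_isotonic_mle (k : ℕ) (hk : 1 ≤ k) (n Y : ℕ → ℝ)
    (hn : ∀ h, 1 ≤ h → h ≤ k → 0 < n h) :
    (∀ i i', 1 ≤ i → i ≤ i' → i' ≤ k → muhat n Y k i ≤ muhat n Y k i') ∧
    (∀ μ : ℕ → ℝ, (∀ i i', 1 ≤ i → i ≤ i' → i' ≤ k → μ i ≤ μ i') →
      ∑ i ∈ Finset.Icc 1 k, n i * (Y i - muhat n Y k i) ^ 2 ≤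
        ∑ i ∈ Finset.Icc 1 k, n i * (Y i - μ i) ^ 2) :=
  sdmmsa_is_isotonic_mle_general k n Y hn
end
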